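/- For each integer n ≥ 10, the polynomial N_n(X) = X^{n-2}(X³ − X − 1) + (X³ + X² − 1) has exactly one real root s_n greater than 1, and for each integer m ≥ 4, the polynomial Q_m(X) = X^{m-3}(X³ − X − 1) − (X³ + X² − 1) has exactly one real root s'_m greater than 1. The sequence (s_n)_{n≥10} is strictly increasing, the sequence (s'_m)_{m≥4} is strictly decreasing, and both sequences converge to the unique real root θ ≈ 1.3247 of X³ − X − 1 (the smallest Pisot number). -/

import Mathlib

/-!
Write `f = X³ - X - 1`, `g = X³ + X² - 1`, so that `N = Xᵏ f + g` (`k = n - 2`) and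
`Q = Xᵏ f - g` (`k = m - 3`). Since `g > 0` on `[1, ∞)`, roots of `N` in `(1, ∞)` lie below `θ`
(where `f < 0`) and roots of `Q` lie above `θ` (where `f > 0`). On `(θ, ∞)` the root equation
of `Q` reads `xᵏ = g x / f x` with `g / f` strictly decreasing, so that root is unique; for `N`
uniqueness comes from Descartes' rule of signs. Finally, at a fixed `z ≠ θ` the sign of
`zᵏ f z ± g z` is that of `f z` once `k` is large, and the intermediate value theorem then traps
the root between `z` and `θ`; this gives both the monotonicity and the convergence.
-/

open Polynomial Filter Set

/-- For `n ≥ 3`, define `N_n(X) = X ^ (n - 2) * (X ^ 3 - X - 1) + (X ^ 3 + X ^ 2 - 1) ∈ ℤ[X]`. -/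
noncomputable def Nn (n : ℕ) : Polynomial ℤ :=
  X ^ (n - 2) * (X ^ 3 - X - 1) + (X ^ 3 + X ^ 2 - 1)

/-- For `m ≥ 4`, define `Q_m(X) = X ^ (m - 3) * (X ^ 3 - X - 1) - (X ^ 3 + X ^ 2 - 1) ∈ ℤ[X]`. -/
noncomputable def Qm (m : ℕ) : Polynomial ℤ :=
  X ^ (m - 3) * (X ^ 3 - X - 1) - (X ^ 3 + X ^ 2 - 1)

namespace Polynomial

variable {R : Type*}

theorem leadingCoeff_C_mul_X_pow_add [Semiring R] {c : R} {n : ℕ} {q : R[X]}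
    (hq : q.natDegree < n) (hc : c ≠ 0) : (C c * X ^ n + q).leadingCoeff = c := by
  rw [leadingCoeff_add_of_degree_lt' (degree_lt_degree (by rwa [natDegree_C_mul_X_pow n c hc])),
    leadingCoeff_C_mul_X_pow]

theorem signVariations_C_mul_X_pow_add [Semiring R] [LinearOrder R] {c : R} {n : ℕ} {q : R[X]}
    (hq : q.natDegree < n) (hc : c ≠ 0) :
    signVariations (C c * X ^ n + q) =
      signVariations q + if SignType.sign c = -SignType.sign q.leadingCoeff then 1 else 0 := by
  have hlead := leadingCoeff_C_mul_X_pow_add hq hc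
  have hne : C c * X ^ n + q ≠ 0 := fun h => hc (by rw [← hlead, h, leadingCoeff_zero])
  rw [signVariations_eq_eraseLead_add_ite hne, hlead, eraseLead_add_of_natDegree_lt_left
    (by rwa [natDegree_C_mul_X_pow n c hc]), eraseLead_C_mul_X_pow, zero_add]

theorem card_le_signVariations [CommRing R] [LinearOrder R] [IsStrictOrderedRing R] {p : R[X]}
    (hp : p ≠ 0) {s : Finset R} (hs : ∀ x ∈ s, 0 < x ∧ p.IsRoot x) :
    s.card ≤ p.signVariations :=
  calc s.card ≤ (p.roots.filter (0 < ·)).toFinset.card := Finset.card_le_card fun x hx => by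
        simpa [Multiset.mem_toFinset, Multiset.mem_filter, mem_roots hp, and_comm] using hs x hx
    _ ≤ (p.roots.filter (0 < ·)).card := Multiset.toFinset_card_le _
    _ = p.roots.countP (0 < ·) := (Multiset.countP_eq_card_filter _ _).symm
    _ ≤ p.signVariations := roots_countP_pos_le_signVariations p

end Polynomial

namespace Salem

def f (x : ℝ) : ℝ := x ^ 3 - x - 1

def g (x : ℝ) : ℝ := x ^ 3 + x ^ 2 - 1

theorem continuous_f : Continuous f := by unfold f; fun_prop

theorem g_pos {x : ℝ} (hx : 1 ≤ x) : 0 < g x := by unfold g; nlinarith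

theorem strictMonoOn_f : StrictMonoOn f (Ici 1) := fun x hx y hy hxy => by
  simp only [mem_Ici] at hx hy
  have : f y - f x = (y - x) * (x ^ 2 + x * y + y ^ 2 - 1) := by unfold f; ring
  nlinarith [mul_pos (sub_pos.2 hxy) (by nlinarith : 0 < x ^ 2 + x * y + y ^ 2 - 1)]

theorem one_lt_of_f_eq_zero {x : ℝ} (hx : f x = 0) : 1 < x := by
  unfold f at hx
  nlinarith [sq_nonneg (x - 1), sq_nonneg (x + 1), sq_nonneg x]

theorem exists_f_eq_zero : ∃ θ, f θ = 0 := by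
  obtain ⟨θ, -, hθ⟩ := intermediate_value_Ioo (by norm_num : (1 : ℝ) ≤ 2)
    continuous_f.continuousOn (show (0 : ℝ) ∈ Ioo (f 1) (f 2) by norm_num [f])
  exact ⟨θ, hθ⟩

noncomputable def θ : ℝ := exists_f_eq_zero.choose

theorem f_θ : f θ = 0 := exists_f_eq_zero.choose_spec

theorem one_lt_θ : 1 < θ := one_lt_of_f_eq_zero f_θ

theorem eq_θ_of_f_eq_zero {x : ℝ} (hx : f x = 0) : x = θ :=
  strictMonoOn_f.injOn (one_lt_of_f_eq_zero hx).le one_lt_θ.le (hx.trans f_θ.symm)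

theorem f_neg {x : ℝ} (hx : 1 ≤ x) (hxθ : x < θ) : f x < 0 :=
  f_θ ▸ strictMonoOn_f hx one_lt_θ.le hxθ

theorem f_pos {x : ℝ} (hθx : θ < x) : 0 < f x :=
  f_θ ▸ strictMonoOn_f one_lt_θ.le (one_lt_θ.trans hθx).le hθx

theorem f_nonpos {x : ℝ} (hx : 1 ≤ x) (hxθ : x ≤ θ) : f x ≤ 0 :=
  f_θ ▸ strictMonoOn_f.monotoneOn hx one_lt_θ.le hxθ

theorem f_nonneg {x : ℝ} (hθx : θ ≤ x) : 0 ≤ f x :=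
  f_θ ▸ strictMonoOn_f.monotoneOn one_lt_θ.le (one_lt_θ.le.trans hθx) hθx

theorem strictAntiOn_g_div_f : StrictAntiOn (fun x => g x / f x) (Ioi θ) :=
  fun x hx y hy hxy => by
    have hfx := f_pos hx
    have hfy := f_pos hy
    have hx0 : 0 < x := zero_lt_one.trans (one_lt_θ.trans hx)
    have hy0 : 0 < y := hx0.trans hxy
    have hcross : g x * f y - g y * f x =
        (y - x) * (1 + x + y + x * y + x ^ 2 * y + x * y ^ 2 + x ^ 2 * y ^ 2) := by
      unfold f g; ring
    rw [div_lt_div_iff₀ hfy hfx]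
    nlinarith [mul_pos (sub_pos.2 hxy) (by positivity :
      0 < 1 + x + y + x * y + x ^ 2 * y + x * y ^ 2 + x ^ 2 * y ^ 2)]

noncomputable def nPoly (k : ℕ) : ℝ[X] := X ^ k * (X ^ 3 - X - 1) + (X ^ 3 + X ^ 2 - 1)

noncomputable def qPoly (k : ℕ) : ℝ[X] := X ^ k * (X ^ 3 - X - 1) - (X ^ 3 + X ^ 2 - 1)

@[simp]
theorem eval_nPoly (k : ℕ) (x : ℝ) : (nPoly k).eval x = x ^ k * f x + g x := by
  simp [nPoly, f, g]

@[simp]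
theorem eval_qPoly (k : ℕ) (x : ℝ) : (qPoly k).eval x = x ^ k * f x - g x := by
  simp [qPoly, f, g]

theorem aeval_Nn (n : ℕ) (x : ℝ) : aeval x (Nn n) = (nPoly (n - 2)).eval x := by
  simp [Nn, f, g]

theorem aeval_Qm (m : ℕ) (x : ℝ) : aeval x (Qm m) = (qPoly (m - 3)).eval x := by
  simp [Qm, f, g]

section N

variable {k : ℕ} {x y z : ℝ}

theorem signVariations_nPoly (hk : 4 ≤ k) : (nPoly k).signVariations = 3 := by
  have h₀ : (C (-1) : ℝ[X]).natDegree < 2 := by simp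
  have h₁ : (C 1 * X ^ 2 + C (-1) : ℝ[X]).natDegree < 3 := by
    apply Nat.lt_succ_of_le; compute_degree!
  have h₂ : (C 1 * X ^ 3 + (C 1 * X ^ 2 + C (-1)) : ℝ[X]).natDegree < k :=
    Nat.lt_of_le_of_lt (m := 3) (by compute_degree!) (by omega)
  have h₃ : (C (-1) * X ^ k + (C 1 * X ^ 3 + (C 1 * X ^ 2 + C (-1))) : ℝ[X]).natDegree
      < k + 1 := by
    apply Nat.lt_succ_of_le; compute_degree!; omega
  have h₄ : (C (-1) * X ^ (k + 1) + (C (-1) * X ^ k + (C 1 * X ^ 3 + (C 1 * X ^ 2 + C (-1))))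
      : ℝ[X]).natDegree < k + 3 :=
    Nat.lt_of_le_of_lt (m := k + 1) (by compute_degree!; omega) (by omega)
  have hsplit : nPoly k = C 1 * X ^ (k + 3) + (C (-1) * X ^ (k + 1) +
      (C (-1) * X ^ k + (C 1 * X ^ 3 + (C 1 * X ^ 2 + C (-1))))) := by
    simp only [nPoly, map_neg, map_one]; ring
  rw [hsplit, signVariations_C_mul_X_pow_add h₄ one_ne_zero,
    signVariations_C_mul_X_pow_add h₃ (by norm_num), signVariations_C_mul_X_pow_add h₂ (by norm_num),
    signVariations_C_mul_X_pow_add h₁ one_ne_zero, signVariations_C_mul_X_pow_add h₀ one_ne_zero,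
    leadingCoeff_C_mul_X_pow_add h₃ (by norm_num), leadingCoeff_C_mul_X_pow_add h₂ (by norm_num),
    leadingCoeff_C_mul_X_pow_add h₁ one_ne_zero, leadingCoeff_C_mul_X_pow_add h₀ one_ne_zero]
  simpa using signVariations_monomial 0 (-1 : ℝ)

theorem exists_root_nPoly_mem_Ioo_zero_one (hk : 8 ≤ k) :
    ∃ r ∈ Ioo (0 : ℝ) 1, (nPoly k).eval r = 0 := by
  have hpow : (0.9 : ℝ) ^ k ≤ 0.9 ^ 8 := pow_le_pow_of_le_one (by norm_num) (by norm_num) hk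
  have h0 : (nPoly k).eval 0 < 0 := by simp [f, g, zero_pow (by omega : k ≠ 0)]
  have h9 : 0 < (nPoly k).eval 0.9 := by simp only [eval_nPoly, f, g]; nlinarith
  obtain ⟨r, hr, hr0⟩ := intermediate_value_Ioo (by norm_num : (0 : ℝ) ≤ 0.9)
    (nPoly k).continuous.continuousOn ⟨h0, h9⟩
  exact ⟨r, ⟨hr.1, hr.2.trans (by norm_num)⟩, hr0⟩

/-- Descartes' rule of signs: `nPoly k` has three sign changes, and `0 < r < 1` and `1` are
already two of its positive roots. -/
theorem eq_of_root_nPoly (hk : 8 ≤ k) (hx : 1 < x) (hy : 1 < y) (hx0 : (nPoly k).eval x = 0)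
    (hy0 : (nPoly k).eval y = 0) : x = y := by
  by_contra hxy
  obtain ⟨r, ⟨hr0, hr1⟩, hr⟩ := exists_root_nPoly_mem_Ioo_zero_one hk
  have hcard : ({r, 1, x, y} : Finset ℝ).card = 4 := by
    rw [Finset.card_insert_of_notMem, Finset.card_insert_of_notMem, Finset.card_pair hxy]
    all_goals simp only [Finset.mem_insert, Finset.mem_singleton, not_or]; and_intros <;> linarith
  have hne : nPoly k ≠ 0 := fun h => by
    simpa [h] using signVariations_nPoly (by omega : 4 ≤ k)
  have hle := card_le_signVariations hne (s := {r, 1, x, y}) (by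
    simp only [Finset.mem_insert, Finset.mem_singleton, IsRoot.def]
    rintro t (rfl | rfl | rfl | rfl)
    exacts [⟨hr0, hr⟩, ⟨one_pos, by simp [f, g]⟩, ⟨by linarith, hx0⟩, ⟨by linarith, hy0⟩])
  rw [hcard, signVariations_nPoly (by omega)] at hle
  omega

theorem eval_nPoly_pos (hθx : θ ≤ x) : 0 < (nPoly k).eval x := by
  have hx1 : 1 ≤ x := one_lt_θ.le.trans hθx
  rw [eval_nPoly]
  exact add_pos_of_nonneg_of_pos (mul_nonneg (pow_nonneg (zero_le_one.trans hx1) k)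
    (f_nonneg hθx)) (g_pos hx1)

theorem exists_root_nPoly_mem_Ioo (h : (nPoly k).eval z < 0) :
    ∃ y ∈ Ioo z θ, (nPoly k).eval y = 0 := by
  have hzθ : z < θ := not_le.1 fun hθz => (eval_nPoly_pos hθz).not_gt h
  exact intermediate_value_Ioo hzθ.le (nPoly k).continuous.continuousOn
    ⟨h, eval_nPoly_pos le_rfl⟩

theorem eval_nPoly_lt_zero_of_lt_pow (hz : 1 < z) (hzθ : z < θ) (h : g z / -f z < z ^ k) :
    (nPoly k).eval z < 0 := by
  have hf := f_neg hz.le hzθ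
  rw [div_lt_iff₀ (neg_pos.2 hf)] at h
  rw [eval_nPoly]
  linarith

/-- The root of `nPoly k` in `(1, ∞)`; a junk value unless `8 ≤ k`. -/
noncomputable def nRoot (k : ℕ) : ℝ := Classical.epsilon fun x => 1 < x ∧ (nPoly k).eval x = 0

theorem nRoot_spec (hk : 8 ≤ k) : 1 < nRoot k ∧ (nPoly k).eval (nRoot k) = 0 := by
  refine Classical.epsilon_spec (p := fun x => 1 < x ∧ (nPoly k).eval x = 0) ?_
  have hpow : (1.1 : ℝ) ^ 8 ≤ 1.1 ^ k := pow_le_pow_right₀ (by norm_num) hk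
  obtain ⟨y, hy, hy0⟩ := exists_root_nPoly_mem_Ioo
    (by simp only [eval_nPoly, f, g]; nlinarith : (nPoly k).eval 1.1 < 0)
  exact ⟨y, by linarith [hy.1], hy0⟩

theorem nRoot_lt_θ (hk : 8 ≤ k) : nRoot k < θ :=
  not_le.1 fun h => (eval_nPoly_pos h).ne' (nRoot_spec hk).2

theorem lt_nRoot (hk : 8 ≤ k) (hz : 1 < z) (h : (nPoly k).eval z < 0) : z < nRoot k := by
  obtain ⟨y, hy, hy0⟩ := exists_root_nPoly_mem_Ioo h
  rw [← eq_of_root_nPoly hk (hz.trans hy.1) (nRoot_spec hk).1 hy0 (nRoot_spec hk).2]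
  exact hy.1

theorem strictMonoOn_nRoot : StrictMonoOn nRoot (Ici 8) := by
  intro a ha b hb hab
  obtain ⟨hx1, hx0⟩ := nRoot_spec ha
  have hf := f_neg hx1.le (nRoot_lt_θ ha)
  refine lt_nRoot hb hx1 ?_
  rw [eval_nPoly] at hx0 ⊢
  nlinarith [pow_lt_pow_right₀ hx1 hab]

theorem tendsto_nRoot : Tendsto nRoot atTop (nhds θ) := by
  refine tendsto_order.2 ⟨fun a ha => ?_, fun b hb => ?_⟩
  · obtain ⟨z, haz, hzθ⟩ := exists_between (max_lt ha one_lt_θ)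
    have hz1 : 1 < z := (le_max_right a 1).trans_lt haz
    filter_upwards [eventually_ge_atTop 8,
      (tendsto_pow_atTop_atTop_of_one_lt hz1).eventually_gt_atTop (g z / -f z)] with k hk hpow
    exact ((le_max_left a 1).trans_lt haz).trans
      (lt_nRoot hk hz1 (eval_nPoly_lt_zero_of_lt_pow hz1 hzθ hpow))
  · filter_upwards [eventually_ge_atTop 8] with k hk using (nRoot_lt_θ hk).trans hb

end N

section Q

variable {k : ℕ} {x y z : ℝ}

theorem eval_qPoly_neg (hx : 1 ≤ x) (hxθ : x ≤ θ) : (qPoly k).eval x < 0 := by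
  rw [eval_qPoly]
  linarith [g_pos hx, mul_nonpos_of_nonneg_of_nonpos (by positivity : (0 : ℝ) ≤ x ^ k)
    (f_nonpos hx hxθ)]

theorem θ_lt_of_root_qPoly (hx : 1 < x) (hx0 : (qPoly k).eval x = 0) : θ < x :=
  not_le.1 fun h => (eval_qPoly_neg hx.le h).ne hx0

theorem eq_of_root_qPoly (hx : 1 < x) (hy : 1 < y) (hx0 : (qPoly k).eval x = 0)
    (hy0 : (qPoly k).eval y = 0) : x = y := by
  have hmono : StrictMonoOn (fun t => t ^ k - g t / f t) (Ioi θ) := fun s hs t ht hst => by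
    have := strictAntiOn_g_div_f hs ht hst
    have := pow_le_pow_left₀ (zero_lt_one.trans (one_lt_θ.trans hs)).le hst.le k
    simp only
    linarith
  have hzero : ∀ {t}, 1 < t → (qPoly k).eval t = 0 → t ^ k - g t / f t = 0 := fun ht ht0 => by
    rw [sub_eq_zero, eq_div_iff (f_pos (θ_lt_of_root_qPoly ht ht0)).ne']
    rw [eval_qPoly] at ht0
    linarith
  exact hmono.injOn (θ_lt_of_root_qPoly hx hx0) (θ_lt_of_root_qPoly hy hy0)
    ((hzero hx hx0).trans (hzero hy hy0).symm)

theorem exists_root_qPoly_mem_Ioo (hz : 1 < z) (h : 0 < (qPoly k).eval z) :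
    ∃ y ∈ Ioo θ z, (qPoly k).eval y = 0 := by
  have hθz : θ < z := not_le.1 fun hzθ => (eval_qPoly_neg hz.le hzθ).not_gt h
  exact intermediate_value_Ioo hθz.le (qPoly k).continuous.continuousOn
    ⟨eval_qPoly_neg one_lt_θ.le le_rfl, h⟩

theorem eval_qPoly_pos_of_lt_pow (hθz : θ < z) (h : g z / f z < z ^ k) :
    0 < (qPoly k).eval z := by
  rw [div_lt_iff₀ (f_pos hθz)] at h
  rw [eval_qPoly]
  linarith

/-- The root of `qPoly k` in `(1, ∞)`; a junk value unless `1 ≤ k`. -/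
noncomputable def qRoot (k : ℕ) : ℝ := Classical.epsilon fun x => 1 < x ∧ (qPoly k).eval x = 0

theorem qRoot_spec (hk : 1 ≤ k) : 1 < qRoot k ∧ (qPoly k).eval (qRoot k) = 0 := by
  refine Classical.epsilon_spec (p := fun x => 1 < x ∧ (qPoly k).eval x = 0) ?_
  have hpow : (3 : ℝ) ^ 1 ≤ 3 ^ k := pow_le_pow_right₀ (by norm_num) hk
  obtain ⟨y, hy, hy0⟩ := exists_root_qPoly_mem_Ioo (by norm_num : (1 : ℝ) < 3)
    (by simp only [eval_qPoly, f, g]; nlinarith : 0 < (qPoly k).eval 3)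
  exact ⟨y, one_lt_θ.trans hy.1, hy0⟩

theorem θ_lt_qRoot (hk : 1 ≤ k) : θ < qRoot k :=
  θ_lt_of_root_qPoly (qRoot_spec hk).1 (qRoot_spec hk).2

theorem qRoot_lt (hk : 1 ≤ k) (hz : 1 < z) (h : 0 < (qPoly k).eval z) : qRoot k < z := by
  obtain ⟨y, hy, hy0⟩ := exists_root_qPoly_mem_Ioo hz h
  rw [eq_of_root_qPoly (qRoot_spec hk).1 (one_lt_θ.trans hy.1) (qRoot_spec hk).2 hy0]
  exact hy.2

theorem strictAntiOn_qRoot : StrictAntiOn qRoot (Ici 1) := by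
  intro a ha b hb hab
  obtain ⟨hx1, hx0⟩ := qRoot_spec ha
  have hf := f_pos (θ_lt_qRoot ha)
  refine qRoot_lt hb hx1 ?_
  rw [eval_qPoly] at hx0 ⊢
  nlinarith [pow_lt_pow_right₀ hx1 hab]

theorem tendsto_qRoot : Tendsto qRoot atTop (nhds θ) := by
  refine tendsto_order.2 ⟨fun a ha => ?_, fun b hb => ?_⟩
  · filter_upwards [eventually_ge_atTop 1] with k hk using ha.trans (θ_lt_qRoot hk)
  · obtain ⟨z, hθz, hzb⟩ := exists_between hb
    have hz1 : 1 < z := one_lt_θ.trans hθz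
    filter_upwards [eventually_ge_atTop 1,
      (tendsto_pow_atTop_atTop_of_one_lt hz1).eventually_gt_atTop (g z / f z)] with k hk hpow
    exact (qRoot_lt hk hz1 (eval_qPoly_pos_of_lt_pow hθz hpow)).trans hzb

end Q

end Salem

theorem salem_sequences_monotone_tendsto_pisot :
    ∃ θ : ℝ, θ ^ 3 - θ - 1 = 0 ∧ (∀ x : ℝ, x ^ 3 - x - 1 = 0 → x = θ) ∧
    ∃ s s' : ℕ → ℝ,
      (∀ n : ℕ, 10 ≤ n → 1 < s n ∧ aeval (s n) (Nn n) = 0 ∧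
        ∀ x : ℝ, 1 < x → aeval x (Nn n) = 0 → x = s n) ∧
      (∀ m : ℕ, 4 ≤ m → 1 < s' m ∧ aeval (s' m) (Qm m) = 0 ∧
        ∀ x : ℝ, 1 < x → aeval x (Qm m) = 0 → x = s' m) ∧
      (∀ n n' : ℕ, 10 ≤ n → n < n' → s n < s n') ∧
      (∀ m m' : ℕ, 4 ≤ m → m < m' → s' m' < s' m) ∧
      Tendsto s atTop (nhds θ) ∧ Tendsto s' atTop (nhds θ) := by
  refine ⟨Salem.θ, Salem.f_θ, fun x hx => Salem.eq_θ_of_f_eq_zero hx,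
    fun n => Salem.nRoot (n - 2), fun m => Salem.qRoot (m - 3), fun n hn => ?_, fun m hm => ?_,
    fun n n' hn hnn' => ?_, fun m m' hm hmm' => ?_,
    Salem.tendsto_nRoot.comp (tendsto_sub_atTop_nat 2),
    Salem.tendsto_qRoot.comp (tendsto_sub_atTop_nat 3)⟩
  · obtain ⟨h1, h0⟩ := Salem.nRoot_spec (k := n - 2) (by omega)
    simp only [Salem.aeval_Nn]
    exact ⟨h1, h0, fun x hx hx0 => Salem.eq_of_root_nPoly (by omega) hx h1 hx0 h0⟩
  · obtain ⟨h1, h0⟩ := Salem.qRoot_spec (k := m - 3) (by omega)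
    simp only [Salem.aeval_Qm]
    exact ⟨h1, h0, fun x hx hx0 => Salem.eq_of_root_qPoly hx h1 hx0 h0⟩
  · exact Salem.strictMonoOn_nRoot (mem_Ici.2 (by omega)) (mem_Ici.2 (by omega)) (by omega)
  · exact Salem.strictAntiOn_qRoot (mem_Ici.2 (by omega)) (mem_Ici.2 (by omega)) (by omega)
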